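/- (Coloring propagation) Let G be the set of polygons of a mesh of a polygonal domain Ω_S, and suppose for each polygon K we have a rigid body motion v_K ∈ RM such that: (i) whenever K has an edge on ∂Ω_S, v_K vanishes at the midpoint of that edge; (ii) whenever polygons K and K' share an edge e, v_K and v_{K'} agree at the midpoint of e. If the mesh is colorable (Algorithm: a polygon turns white if it has two boundary edges, or one boundary edge and a white neighbor, or two white neighbors; repeating until stable turns all polygons white), then v_K = 0 for every polygon K. -/
import Mathlib


/-- The set of white polygons produced by the coloring algorithm: a polygon turns white if
it has two distinct boundary-edge midpoints, or one boundary-edge midpoint and a white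
neighbor (sharing an edge with a distinct midpoint), or two white neighbors whose shared
edges have distinct midpoints.  Here `bmid K` is the set of midpoints of boundary edges of
`K`, and `smid K K'` the set of midpoints of edges shared by `K` and `K'`. -/
inductive White {ι : Type*} (bmid : ι → Set (ℝ × ℝ)) (smid : ι → ι → Set (ℝ × ℝ)) :
    ι → Prop
  | boundary2 (K : ι) (p q : ℝ × ℝ) (hp : p ∈ bmid K) (hq : q ∈ bmid K) (hpq : p ≠ q) :
      White bmid smid K
  | boundary1 (K K' : ι) (p q : ℝ × ℝ) (hp : p ∈ bmid K) (hK' : White bmid smid K')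
      (hq : q ∈ smid K K') (hpq : p ≠ q) : White bmid smid K
  | neighbors2 (K K' K'' : ι) (p q : ℝ × ℝ) (hK' : White bmid smid K')
      (hK'' : White bmid smid K'') (hp : p ∈ smid K K') (hq : q ∈ smid K K'')
      (hpq : p ≠ q) : White bmid smid K

/-- Coloring propagation: if each polygon `K` carries a rigid body motion `v_K` vanishing
at the midpoints of its boundary edges, neighboring rigid body motions agree at the
midpoints of shared edges, and the mesh is colorable (every polygon turns white), then
every `v_K` is identically zero. -/
theorem coloring_propagation
    {ι : Type*}
    (bmid : ι → Set (ℝ × ℝ)) (smid : ι → ι → Set (ℝ × ℝ))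
    (v : ι → (ℝ × ℝ → ℝ × ℝ))
    -- each v_K is a rigid body motion
    (hrigid : ∀ K : ι, ∃ a b c : ℝ, ∀ z : ℝ × ℝ, v K z = (a - c * z.2, b + c * z.1))
    -- (i) v_K vanishes at midpoints of boundary edges of K
    (hbdry : ∀ K : ι, ∀ p ∈ bmid K, v K p = 0)
    -- (ii) v_K and v_K' agree at midpoints of shared edges
    (hshare : ∀ K K' : ι, ∀ p ∈ smid K K', v K p = v K' p)
    -- the mesh is colorable
    (hcolor : ∀ K : ι, White bmid smid K) :
    ∀ (K : ι) (z : ℝ × ℝ), v K z = 0 := by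
  -- Key lemma: a rigid body motion vanishing at two distinct points is zero.
  have key : ∀ (K : ι) (p q : ℝ × ℝ), p ≠ q → v K p = 0 → v K q = 0 →
      ∀ z, v K z = 0 := by
    intro K p q hpq hp hq z
    obtain ⟨a, b, c, hf⟩ := hrigid K
    rw [hf] at hp hq
    have hp1 : a - c * p.2 = 0 := congrArg Prod.fst hp
    have hp2 : b + c * p.1 = 0 := congrArg Prod.snd hp
    have hq1 : a - c * q.2 = 0 := congrArg Prod.fst hq
    have hq2' : b + c * q.1 = 0 := congrArg Prod.snd hq
    have hc : c = 0 := by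
      by_contra hc
      apply hpq
      have h1 : p.1 = q.1 := mul_left_cancel₀ hc (by linarith)
      have h2 : p.2 = q.2 := mul_left_cancel₀ hc (by linarith)
      exact Prod.ext h1 h2
    rw [hf]
    subst hc
    have ha : a = 0 := by linarith
    have hb : b = 0 := by linarith
    simp [ha, hb, Prod.ext_iff]
  intro K
  induction hcolor K with
  | boundary2 K p q hp hq hpq =>
      exact key K p q hpq (hbdry K p hp) (hbdry K q hq)
  | boundary1 K K' p q hp hK' hq hpq ih =>
      exact key K p q hpq (hbdry K p hp) ((hshare K K' q hq).trans (ih q))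
  | neighbors2 K K' K'' p q hK' hK'' hp hq hpq ih' ih'' =>
      exact key K p q hpq ((hshare K K' p hp).trans (ih' p))
        ((hshare K K'' q hq).trans (ih'' q))
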